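/- Let σ > 0, ρ_Y, ρ_Z ∈ (−1,1), and let D be a real number with 0 < D ≤ σ²·(1−ρ_Y²). Define s := 1/D − 1/(σ²·(1−ρ_Y²)) and Q := (ρ_Z² − ρ_Y²) / (σ²·(1−ρ_Z²)·(1−ρ_Y²)). Then 1 + Q·D > 0 and σ²·(1−ρ_Z²) / (1 + s·σ²·(1−ρ_Z²)) = D / (1 + Q·D). -/
import Mathlib


/-- With the signal-to-noise ratio `s = 1/D − 1/(σ²(1−ρ_Y²))` chosen so that the reconstructor
distortion equals `D`, the adversary's MSE `σ²(1−ρ_Z²)/(1 + s·σ²(1−ρ_Z²))` equals the closed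
form `D/(1 + Q·D)` of Proposition 1, where
`Q = (ρ_Z² − ρ_Y²)/(σ²(1−ρ_Z²)(1−ρ_Y²))`; moreover `1 + Q·D > 0`. -/
theorem adversary_mse_closed_form (σ ρY ρZ D : ℝ) (hσ : 0 < σ)
    (hρY : ρY ∈ Set.Ioo (-1 : ℝ) 1) (hρZ : ρZ ∈ Set.Ioo (-1 : ℝ) 1)
    (hD0 : 0 < D) (hD : D ≤ σ ^ 2 * (1 - ρY ^ 2)) :
    0 < 1 + (ρZ ^ 2 - ρY ^ 2) / (σ ^ 2 * (1 - ρZ ^ 2) * (1 - ρY ^ 2)) * D ∧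
      σ ^ 2 * (1 - ρZ ^ 2) /
          (1 + (1 / D - 1 / (σ ^ 2 * (1 - ρY ^ 2))) * (σ ^ 2 * (1 - ρZ ^ 2))) =
        D / (1 + (ρZ ^ 2 - ρY ^ 2) / (σ ^ 2 * (1 - ρZ ^ 2) * (1 - ρY ^ 2)) * D) := by
  obtain ⟨hY1, hY2⟩ := hρY
  obtain ⟨hZ1, hZ2⟩ := hρZ
  have hσ2 : (0:ℝ) < σ ^ 2 := by positivity
  have hY : (0:ℝ) < 1 - ρY ^ 2 := by nlinarith
  have hZ : (0:ℝ) < 1 - ρZ ^ 2 := by nlinarith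
  have hden : (0:ℝ) < σ ^ 2 * (1 - ρZ ^ 2) * (1 - ρY ^ 2) := by positivity
  have hnum : (0:ℝ) < σ ^ 2 * (1 - ρZ ^ 2) * (1 - ρY ^ 2) + (ρZ ^ 2 - ρY ^ 2) * D := by
    nlinarith [sq_nonneg ρZ, mul_pos hσ2 hY]
  have hQ : 0 < 1 + (ρZ ^ 2 - ρY ^ 2) / (σ ^ 2 * (1 - ρZ ^ 2) * (1 - ρY ^ 2)) * D := by
    rw [div_mul_eq_mul_div]
    have := div_pos hnum hden
    rw [add_div, div_self hden.ne'] at this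
    linarith
  refine ⟨hQ, ?_⟩
  have hs : 0 < 1 + (1 / D - 1 / (σ ^ 2 * (1 - ρY ^ 2))) * (σ ^ 2 * (1 - ρZ ^ 2)) := by
    have h1 : 1 / (σ ^ 2 * (1 - ρY ^ 2)) ≤ 1 / D :=
      one_div_le_one_div_of_le hD0 hD
    have h2 : 0 ≤ (1 / D - 1 / (σ ^ 2 * (1 - ρY ^ 2))) * (σ ^ 2 * (1 - ρZ ^ 2)) := by
      apply mul_nonneg (by linarith) (by positivity)
    linarith
  rw [div_eq_div_iff hs.ne' hQ.ne']
  field_simp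
  ring
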